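/- For M-periodic grid functions e and U, the exact identity -h Σ_{i=1}^M (δ_x² e_i) U_i (Δ_x e_i) = (h/2) Σ_{i=1}^M (δ_x e_{i+1/2})² δ_x U_{i+1/2} holds, where δ_x² e_i = (e_{i+1} - 2e_i + e_{i-1})/h², Δ_x e_i = (e_{i+1} - e_{i-1})/(2h), and δ_x e_{i+1/2} = (e_{i+1} - e_i)/h. -/
import Mathlib


/-- Central difference operator `Δ_x w i = (w (i+1) - w (i-1)) / (2h)`. -/
noncomputable def dX (h : ℝ) (w : ℤ → ℝ) (i : ℤ) : ℝ := (w (i + 1) - w (i - 1)) / (2 * h)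

/-- Second-order central difference `δ_x² w i = (w (i+1) - 2 w i + w (i-1)) / h²`. -/
noncomputable def dXX (h : ℝ) (w : ℤ → ℝ) (i : ℤ) : ℝ := (w (i + 1) - 2 * w i + w (i - 1)) / h ^ 2

lemma shift_sum (M : ℕ) (hM : 1 ≤ M) (g : ℤ → ℝ) (hg : ∀ i : ℤ, g (i + M) = g i) :
    ∑ i ∈ Finset.Icc (1 : ℤ) (M : ℤ), g (i - 1) = ∑ i ∈ Finset.Icc (1 : ℤ) (M : ℤ), g i := by
  have hM' : (1 : ℤ) ≤ (M : ℤ) := by exact_mod_cast hM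
  have h1 : ∑ i ∈ Finset.Icc (1 : ℤ) (M : ℤ), g (i - 1)
      = ∑ i ∈ Finset.Icc (0 : ℤ) ((M : ℤ) - 1), g i := by
    rw [show Finset.Icc (1 : ℤ) (M : ℤ)
        = Finset.map (addRightEmbedding 1) (Finset.Icc 0 ((M : ℤ) - 1)) by
      rw [Finset.map_add_right_Icc]; norm_num]
    rw [Finset.sum_map]
    simp [addRightEmbedding]
  rw [h1]
  have h2 : Finset.Icc (0 : ℤ) ((M : ℤ) - 1) = insert 0 (Finset.Icc 1 ((M : ℤ) - 1)) := by
    ext x; simp; omega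
  have h3 : Finset.Icc (1 : ℤ) (M : ℤ) = insert (M : ℤ) (Finset.Icc 1 ((M : ℤ) - 1)) := by
    ext x; simp; omega
  rw [h2, h3, Finset.sum_insert (by simp), Finset.sum_insert (by simp)]
  have : g 0 = g (M : ℤ) := by
    have := hg 0; simpa using this.symm
  rw [this]

theorem stmt_15 (M : ℕ) (hM : 1 ≤ M) (h : ℝ) (hh : 0 < h)
    (e U : ℤ → ℝ) (he : ∀ i : ℤ, e (i + M) = e i) (hU : ∀ i : ℤ, U (i + M) = U i) :
    -(h * ∑ i ∈ Finset.Icc (1 : ℤ) (M : ℤ), dXX h e i * U i * dX h e i) =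
      (h / 2) * ∑ i ∈ Finset.Icc (1 : ℤ) (M : ℤ),
        ((e (i + 1) - e i) / h) ^ 2 * ((U (i + 1) - U i) / h) := by
  have hne : h ≠ 0 := ne_of_gt hh
  set a : ℤ → ℝ := fun i => ((e (i + 1) - e i) / h) ^ 2 with ha
  set g : ℤ → ℝ := fun i => a i * U (i + 1) with hgdef
  have hgper : ∀ i : ℤ, g (i + M) = g i := by
    intro i
    simp only [hgdef, ha]
    rw [show i + (M : ℤ) + 1 = (i + 1) + (M : ℤ) by ring, he, hU, he]
  have key : ∀ i : ℤ, h * (dXX h e i * U i * dX h e i)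
      = (1 / 2) * (a i * U i - g (i - 1)) := by
    intro i
    simp only [hgdef, ha, dXX, dX]
    rw [show i - 1 + 1 = i by ring]
    field_simp
    ring
  rw [neg_eq_iff_eq_neg]
  calc h * ∑ i ∈ Finset.Icc (1 : ℤ) (M : ℤ), dXX h e i * U i * dX h e i
      = ∑ i ∈ Finset.Icc (1 : ℤ) (M : ℤ), (1 / 2) * (a i * U i - g (i - 1)) := by
        rw [Finset.mul_sum]
        exact Finset.sum_congr rfl fun i _ => key i
    _ = (1 / 2) * (∑ i ∈ Finset.Icc (1 : ℤ) (M : ℤ), a i * U i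
          - ∑ i ∈ Finset.Icc (1 : ℤ) (M : ℤ), g (i - 1)) := by
        rw [← Finset.mul_sum, Finset.sum_sub_distrib]
    _ = (1 / 2) * ∑ i ∈ Finset.Icc (1 : ℤ) (M : ℤ), (a i * U i - g i) := by
        rw [shift_sum M hM g hgper, Finset.sum_sub_distrib]
    _ = -((h / 2) * ∑ i ∈ Finset.Icc (1 : ℤ) (M : ℤ),
          ((e (i + 1) - e i) / h) ^ 2 * ((U (i + 1) - U i) / h)) := by
        rw [neg_mul_eq_mul_neg, ← Finset.sum_neg_distrib, Finset.mul_sum, Finset.mul_sum]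
        refine Finset.sum_congr rfl fun i _ => ?_
        simp only [hgdef, ha]
        field_simp
        ring
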